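/- arXiv:2007.09349 — 3 statements merged into one kernel-verified Lean document; each statement's English description precedes it below -/
import Mathlib

section
/- Let g_n be a density generator with cumulative generators Ḡ_n and 𝒢̄_n, and suppose ∫_{ℝⁿ} ‖z‖² Ḡ_n(‖z‖²/2) dz < ∞. Then c_n* ∫_{ℝⁿ} ‖z‖² Ḡ_n(‖z‖²/2) dz = n · (c_n*/c_n**); that is, for Z ~ E_n(0, I_n, Ḡ_n), E[ZᵀZ] = n c_n*/c_n**. -/
/-!
In polar coordinates, followed by the substitution `t = r² / 2`, a radial integral over `ℝⁿ` becomes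
`∫ φ (‖z‖² / 2) dz = (2π)^(n/2) / Γ(n/2) * ∫₀^∞ t^(n/2 - 1) φ t dt`. Applied to `φ t = 2 t Ḡ(t)` this
reduces the claim to `∫₀^∞ t^(n/2) Ḡ(t) dt = (n/2) ∫₀^∞ t^(n/2 - 1) 𝒢̄(t) dt`, which is Tonelli's
theorem for `t^(n/2) = (n/2) ∫₀^t s^(n/2 - 1) ds` (the layer-cake formula for the measure `Ḡ(t) dt`).
Finally `(2π)^(n/2) / Γ(n/2) * ∫₀^∞ t^(n/2 - 1) 𝒢̄(t) dt = 1 / c_n**`.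
-/

open MeasureTheory Real Set

theorem aemeasurable_restrict_Ioi_of_integrableOn_rpow_mul {f : ℝ → ℝ} {q : ℝ}
    (hf : IntegrableOn (fun t => t ^ q * f t) (Ioi 0)) :
    AEMeasurable f (volume.restrict (Ioi 0)) := by
  refine ((measurable_id.pow_const (-q)).aemeasurable.mul hf.aemeasurable).congr
    ((ae_restrict_mem measurableSet_Ioi).mono fun t (ht : 0 < t) => ?_)
  rw [Pi.mul_apply, id_eq, rpow_neg ht.le, inv_mul_cancel_left₀ (rpow_pos_of_pos ht q).ne']

theorem integrableOn_Ioi_of_integrableOn_rpow_mul {f : ℝ → ℝ} {q a u : ℝ}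
    (hf : IntegrableOn (fun t => t ^ q * f t) (Ioi 0)) (hu : 0 < u)
    (ha : IntegrableOn f (Ioi a)) : IntegrableOn f (Ioi u) := by
  have hcompact : IntegrableOn f (Icc u a) := by
    have hpos : Icc u a ⊆ Ioi 0 := fun t ht => hu.trans_le ht.1
    refine ((hf.mono_set hpos).continuousOn_mul (g := fun t => t ^ (-q)) ?_ isCompact_Icc).congr_fun
      (fun t ht => ?_) measurableSet_Icc
    · exact continuousOn_id.rpow_const fun t ht => Or.inl (hpos ht).ne'
    · dsimp only
      rw [rpow_neg (hpos ht).le, inv_mul_cancel_left₀ (rpow_pos_of_pos (hpos ht) q).ne']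
  exact (hcompact.union ha).mono_set fun t (ht : u < t) =>
    (le_or_gt t a).imp (fun hta => ⟨ht.le, hta⟩) id

-- Where `f` is not integrable on `Ioi u`, the Bochner integral defining `F u` is the junk value `0`.
theorem exists_integrableOn_Ioi_of_integral_mul_ne_zero {f F w : ℝ → ℝ}
    (hF : ∀ u > 0, F u = ∫ v in Ioi u, f v) (hne : ∫ t in Ioi 0, w t * F t ≠ 0) :
    ∃ a, IntegrableOn f (Ioi a) := by
  by_contra! h
  refine hne (setIntegral_eq_zero_of_forall_eq_zero fun t ht => ?_)
  rw [hF t ht, integral_undef (h t), mul_zero]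

theorem integrableOn_Ioi_of_integral_rpow_mul_ne_zero {f F : ℝ → ℝ} {q q' : ℝ}
    (hf : IntegrableOn (fun t => t ^ q * f t) (Ioi 0)) (hF : ∀ u > 0, F u = ∫ v in Ioi u, f v)
    (hne : ∫ t in Ioi 0, t ^ q' * F t ≠ 0) {u : ℝ} (hu : 0 < u) : IntegrableOn f (Ioi u) :=
  let ⟨_, ha⟩ := exists_integrableOn_Ioi_of_integral_mul_ne_zero hF hne
  integrableOn_Ioi_of_integrableOn_rpow_mul hf hu ha

theorem integral_Ioi_rpow_mul_eq_mul_integral_tail {p : ℝ} (hp : 0 < p) {f F : ℝ → ℝ}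
    (hf0 : ∀ t > 0, 0 ≤ f t) (hfm : AEMeasurable f (volume.restrict (Ioi 0)))
    (hfi : ∀ u > 0, IntegrableOn f (Ioi u)) (hF : ∀ u > 0, F u = ∫ v in Ioi u, f v)
    (hFi : IntegrableOn (fun t => t ^ (p - 1) * F t) (Ioi 0)) :
    ∫ t in Ioi 0, t ^ p * f t = p * ∫ t in Ioi 0, t ^ (p - 1) * F t := by
  set μ := (volume.restrict (Ioi (0 : ℝ))).withDensity fun t => ENNReal.ofReal (f t)
  have hpos : ∀ᵐ t ∂volume.restrict (Ioi (0 : ℝ)), 0 < t := ae_restrict_mem measurableSet_Ioi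
  have hF0 : ∀ t > 0, 0 ≤ F t := fun t ht =>
    (hF t ht).symm ▸ setIntegral_nonneg measurableSet_Ioi fun v hv => hf0 v (ht.trans hv)
  have hlayer := lintegral_rpow_eq_lintegral_meas_lt_mul μ (f := id)
    ((withDensity_absolutelyContinuous _ _).ae_le (hpos.mono fun t ht => ht.le)) aemeasurable_id hp
  simp only [id_eq] at hlayer
  have htail : ∀ t > 0, μ {a | t < a} = ENNReal.ofReal (F t) := by
    intro t ht
    change μ (Ioi t) = _
    rw [withDensity_apply _ measurableSet_Ioi, Measure.restrict_restrict measurableSet_Ioi,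
      inter_eq_self_of_subset_left (Ioi_subset_Ioi ht.le), hF t ht,
      ofReal_integral_eq_lintegral_ofReal (hfi t ht)
        ((ae_restrict_mem measurableSet_Ioi).mono fun v hv => hf0 v (ht.trans hv))]
  have hlhs : ∫⁻ t, ENNReal.ofReal (t ^ p) ∂μ = ∫⁻ t in Ioi 0, ENNReal.ofReal (t ^ p * f t) := by
    rw [lintegral_withDensity_eq_lintegral_mul₀' hfm.ennreal_ofReal (by fun_prop)]
    refine lintegral_congr_ae (hpos.mono fun t ht => ?_)
    rw [Pi.mul_apply, ← ENNReal.ofReal_mul (hf0 t ht), mul_comm]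
  have hrhs : ∫⁻ t in Ioi 0, μ {a | t < a} * ENNReal.ofReal (t ^ (p - 1)) =
      ENNReal.ofReal (∫ t in Ioi 0, t ^ (p - 1) * F t) := by
    rw [ofReal_integral_eq_lintegral_ofReal hFi
      (hpos.mono fun t ht => mul_nonneg (rpow_nonneg ht.le _) (hF0 t ht))]
    refine lintegral_congr_ae (hpos.mono fun t ht => ?_)
    dsimp only
    rw [htail t ht, ← ENNReal.ofReal_mul (hF0 t ht), mul_comm]
  have hnn : 0 ≤ᵐ[volume.restrict (Ioi 0)] fun t : ℝ => t ^ p * f t :=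
    hpos.mono fun t ht => mul_nonneg (rpow_nonneg ht.le _) (hf0 t ht)
  rw [integral_eq_lintegral_of_nonneg_ae hnn
      ((measurable_id.pow_const p).aemeasurable.mul hfm).aestronglyMeasurable,
    ← hlhs, hlayer, hrhs, ← ENNReal.ofReal_mul hp.le, ENNReal.toReal_ofReal]
  exact mul_nonneg hp.le (setIntegral_nonneg measurableSet_Ioi fun t ht =>
    mul_nonneg (rpow_nonneg (le_of_lt ht) _) (hF0 t ht))

theorem integral_Ioi_rpow_mul_comp_sq_div_two (s : ℝ) (φ : ℝ → ℝ) :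
    ∫ r in Ioi 0, r ^ (2 * s + 1) * φ (r ^ 2 / 2) = 2 ^ s * ∫ t in Ioi 0, t ^ s * φ t := by
  set ψ : ℝ → ℝ := fun y => y ^ s * φ (y / 2) / 2
  have hsq : ∫ r in Ioi 0, r ^ (2 * s + 1) * φ (r ^ 2 / 2) = ∫ y in Ioi 0, ψ y := by
    rw [← integral_comp_rpow_Ioi_of_pos (g := ψ) two_pos]
    refine setIntegral_congr_fun measurableSet_Ioi fun r (hr : 0 < r) => ?_
    simp only [ψ, smul_eq_mul, rpow_two]
    rw [← rpow_natCast, ← rpow_mul hr.le, rpow_add hr, rpow_one]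
    norm_num
    ring
  have hscale : ∫ y in Ioi 0, ψ y = 2 * ∫ t in Ioi 0, ψ (2 * t) := by
    rw [integral_comp_mul_left_Ioi ψ 0 two_pos, mul_zero, smul_eq_mul,
      mul_inv_cancel_left₀ two_ne_zero]
  rw [hsq, hscale, ← integral_const_mul, ← integral_const_mul]
  refine setIntegral_congr_fun measurableSet_Ioi fun t (ht : 0 < t) => ?_
  simp only [ψ, mul_rpow zero_le_two ht.le, mul_div_cancel_left₀ t two_ne_zero]
  ring

section Radial

variable {E : Type*} [NormedAddCommGroup E] [InnerProductSpace ℝ E] [FiniteDimensional ℝ E]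
  [MeasurableSpace E] [BorelSpace E] [Nontrivial E]

theorem integral_comp_norm_sq_div_two (φ : ℝ → ℝ) :
    ∫ z : E, φ (‖z‖ ^ 2 / 2) = (2 * π) ^ ((Module.finrank ℝ E : ℝ) / 2) /
      Gamma ((Module.finrank ℝ E : ℝ) / 2) *
      ∫ t in Ioi 0, t ^ ((Module.finrank ℝ E : ℝ) / 2 - 1) * φ t := by
  have hpolar := integral_fun_norm_addHaar (volume : Measure E) fun r => φ (r ^ 2 / 2)
  have hball := InnerProductSpace.volume_ball (0 : E) 1
  have hd : 0 < Module.finrank ℝ E := Module.finrank_pos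
  generalize Module.finrank ℝ E = d at *
  have hradial : ∫ r in Ioi 0, r ^ (d - 1) • φ (r ^ 2 / 2) =
      ∫ r in Ioi 0, r ^ (2 * ((d : ℝ) / 2 - 1) + 1) * φ (r ^ 2 / 2) := by
    refine setIntegral_congr_fun measurableSet_Ioi fun r (hr : 0 < r) => ?_
    rw [smul_eq_mul, ← rpow_natCast, Nat.cast_sub hd]
    ring_nf
  replace hball : volume.real (Metric.ball (0 : E) 1) =
      π ^ ((d : ℝ) / 2) / Gamma ((d : ℝ) / 2 + 1) := by
    rw [measureReal_def, hball, ENNReal.ofReal_one, one_pow, one_mul,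
      ENNReal.toReal_ofReal (by positivity), sqrt_eq_rpow, ← rpow_natCast, ← rpow_mul pi_pos.le]
    ring_nf
  rw [hpolar, hradial, integral_Ioi_rpow_mul_comp_sq_div_two, hball, nsmul_eq_mul, smul_eq_mul,
    Gamma_add_one (by positivity), mul_rpow zero_le_two pi_pos.le, rpow_sub_one two_ne_zero]
  have : (d : ℝ) ≠ 0 := by positivity
  have : Gamma ((d : ℝ) / 2) ≠ 0 := (Gamma_pos_of_pos (by positivity)).ne'
  field_simp

theorem integral_norm_sq_mul_comp_norm_sq_div_two {G GG : ℝ → ℝ} (hG0 : ∀ t > 0, 0 ≤ G t)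
    (hGm : AEMeasurable G (volume.restrict (Ioi 0))) (hGi : ∀ u > 0, IntegrableOn G (Ioi u))
    (hGG : ∀ u > 0, GG u = ∫ v in Ioi u, G v)
    (hGG_int : IntegrableOn (fun t => t ^ ((Module.finrank ℝ E : ℝ) / 2 - 1) * GG t) (Ioi 0)) :
    ∫ z : E, ‖z‖ ^ 2 * G (‖z‖ ^ 2 / 2) = Module.finrank ℝ E *
      ((2 * π) ^ ((Module.finrank ℝ E : ℝ) / 2) / Gamma ((Module.finrank ℝ E : ℝ) / 2) *
        ∫ t in Ioi 0, t ^ ((Module.finrank ℝ E : ℝ) / 2 - 1) * GG t) := by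
  have hradial := integral_comp_norm_sq_div_two (E := E) fun t => 2 * t * G t
  simp only [mul_div_cancel₀ _ (two_ne_zero' ℝ)] at hradial
  have hd : 0 < Module.finrank ℝ E := Module.finrank_pos
  generalize Module.finrank ℝ E = d at *
  have htail := integral_Ioi_rpow_mul_eq_mul_integral_tail
    (p := (d : ℝ) / 2) (by positivity) hG0 hGm hGi hGG hGG_int
  have hweight : ∫ t in Ioi 0, t ^ ((d : ℝ) / 2 - 1) * (2 * t * G t) =
      2 * ∫ t in Ioi 0, t ^ ((d : ℝ) / 2) * G t := by
    rw [← integral_const_mul]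
    refine setIntegral_congr_fun measurableSet_Ioi fun t (ht : 0 < t) => ?_
    rw [rpow_sub_one ht.ne']
    field_simp
  rw [hradial, hweight, htail]
  ring

end Radial

theorem stmt_5_general (n : ℕ) (hn : 1 ≤ n) (g G GG : ℝ → ℝ)
    (hg0 : ∀ t, 0 ≤ g t)
    (hG : ∀ u : ℝ, G u = ∫ v in Ioi u, g v)
    (hG_int : IntegrableOn (fun t : ℝ => t ^ ((n : ℝ) / 2 - 1) * G t) (Ioi 0))
    (hGG : ∀ u : ℝ, GG u = ∫ v in Ioi u, G v)
    (hGG_int : IntegrableOn (fun t : ℝ => t ^ ((n : ℝ) / 2 - 1) * GG t) (Ioi 0))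
    (hGG_pos : 0 < ∫ t in Ioi (0 : ℝ), t ^ ((n : ℝ) / 2 - 1) * GG t)
    (cs css : ℝ)
    (hcss : css = Real.Gamma ((n : ℝ) / 2) / (2 * π) ^ ((n : ℝ) / 2) *
      (∫ t in Ioi (0 : ℝ), t ^ ((n : ℝ) / 2 - 1) * GG t)⁻¹) :
    cs * (∫ z : EuclideanSpace ℝ (Fin n), ‖z‖ ^ 2 * G (‖z‖ ^ 2 / 2)) = n * (cs / css) := by
  have : Nontrivial (EuclideanSpace ℝ (Fin n)) :=
    Module.nontrivial_of_finrank_pos (R := ℝ) (by rw [finrank_euclideanSpace_fin]; omega)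
  have hG0 : ∀ t > 0, 0 ≤ G t := fun t _ =>
    (hG t).symm ▸ setIntegral_nonneg measurableSet_Ioi fun v _ => hg0 v
  have hGi : ∀ u > 0, IntegrableOn G (Ioi u) := fun _ =>
    integrableOn_Ioi_of_integral_rpow_mul_ne_zero hG_int (fun u _ => hGG u) hGG_pos.ne'
  have hmoment := integral_norm_sq_mul_comp_norm_sq_div_two (E := EuclideanSpace ℝ (Fin n)) hG0
    (aemeasurable_restrict_Ioi_of_integrableOn_rpow_mul hG_int) hGi (fun u _ => hGG u)
    (by rwa [finrank_euclideanSpace_fin])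
  rw [hmoment, finrank_euclideanSpace_fin, hcss, div_eq_mul_inv cs, mul_inv, inv_div, inv_inv]
  ring

/-- Let `g_n` be a density generator with cumulative generators `Ḡ_n` and `𝒢̄_n`, and suppose
`∫_{ℝⁿ} ‖z‖² Ḡ_n(‖z‖²/2) dz < ∞`. Then `c_n* ∫_{ℝⁿ} ‖z‖² Ḡ_n(‖z‖²/2) dz = n (c_n*/c_n**)`;
that is, for `Z ~ E_n(0, I_n, Ḡ_n)`, `E[ZᵀZ] = n c_n*/c_n**`. -/
theorem stmt_5 (n : ℕ) (hn : 1 ≤ n) (g G GG : ℝ → ℝ)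
    (hg0 : ∀ t, 0 ≤ g t) (hgm : Measurable g)
    (hg_int : IntegrableOn (fun t : ℝ => t ^ ((n : ℝ) / 2 - 1) * g t) (Ioi 0))
    (hg_pos : 0 < ∫ t in Ioi (0 : ℝ), t ^ ((n : ℝ) / 2 - 1) * g t)
    (hG : ∀ u : ℝ, G u = ∫ v in Ioi u, g v)
    (hG_int : IntegrableOn (fun t : ℝ => t ^ ((n : ℝ) / 2 - 1) * G t) (Ioi 0))
    (hG_pos : 0 < ∫ t in Ioi (0 : ℝ), t ^ ((n : ℝ) / 2 - 1) * G t)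
    (hGG : ∀ u : ℝ, GG u = ∫ v in Ioi u, G v)
    (hGG_int : IntegrableOn (fun t : ℝ => t ^ ((n : ℝ) / 2 - 1) * GG t) (Ioi 0))
    (hGG_pos : 0 < ∫ t in Ioi (0 : ℝ), t ^ ((n : ℝ) / 2 - 1) * GG t)
    (cs css : ℝ)
    (hcs : cs = Real.Gamma ((n : ℝ) / 2) / (2 * π) ^ ((n : ℝ) / 2) *
      (∫ t in Ioi (0 : ℝ), t ^ ((n : ℝ) / 2 - 1) * G t)⁻¹)
    (hcss : css = Real.Gamma ((n : ℝ) / 2) / (2 * π) ^ ((n : ℝ) / 2) *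
      (∫ t in Ioi (0 : ℝ), t ^ ((n : ℝ) / 2 - 1) * GG t)⁻¹)
    (hfin : Integrable (fun z : EuclideanSpace ℝ (Fin n) => ‖z‖ ^ 2 * G (‖z‖ ^ 2 / 2))) :
    cs * (∫ z : EuclideanSpace ℝ (Fin n), ‖z‖ ^ 2 * G (‖z‖ ^ 2 / 2)) = n * (cs / css) :=
  stmt_5_general n hn g G GG hg0 hG hG_int hGG hGG_int hGG_pos cs css hcss
end

section
/- Let X ~ N_n(μ, Σ) be multivariate normal with mean μ and positive definite covariance Σ = (σ_{ij}), and let p₁,…,p_n be nonnegative integers with p₁ ≥ 2 such that all moments below are finite. Then E[∏_{i=1}^n X_i^{p_i}] = σ₁₁ E[X₁^{p₁−2} ∏_{k=2}^n X_k^{p_k}] + μ₁² E[X₁^{p₁−2} ∏_{k=2}^n X_k^{p_k}] + σ₁₁²(p₁−2)(p₁−3) E[X₁^{p₁−4} ∏_{k=2}^n X_k^{p_k}] + 2 Σ_{j=2}^n σ₁₁ σ_{j1}(p₁−2)p_j E[X₁^{p₁−3} X_j^{p_j−1} ∏_{k=2,k≠j}^n X_k^{p_k}] + Σ_{j=2}^n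 σ_{j1}² p_j(p_j−1) E[X₁^{p₁−2} X_j^{p_j−2} ∏_{k=2,k≠j}^n X_k^{p_k}] + Σ_{j=2}^n Σ_{i=2,i≠j}^n σ_{j1}σ_{i1} p_j p_i E[X_i^{p_i−1} X_j^{p_j−1} X₁^{p₁−2} ∏_{k=2,k≠i,j}^n X_k^{p_k}] + 2μ₁ { σ₁₁(p₁−2) E[X₁^{p₁−3} ∏_{k=2}^n X_k^{p_k}] + Σ_{j=2}^n σ_{j1} p_j E[X_j^{p_j−1} X₁^{p₁−2} ∏_{k=2,k≠j}^n X_k^{p_k}] }. -/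
/-
Gaussian integration by parts (Stein's identity). Along the `j`-th column `v` of the covariance
`Σ`, the density satisfies `∂_v φ(x) = -(x_j - μ_j) φ(x)`, so
`E[(X_j - μ_j) f(X)] = E[∂_v f(X)] = Σ_k σ_{kj} E[∂_k f(X)]`. For a monomial `f = x^q` this reads
`E[X^(q + e_j)] = μ_j E[X^q] + Σ_k σ_{kj} q_k E[X^(q - e_k)]`. The recursion is this identity in the
first coordinate, applied to `X^p`, then to `X^(p - e₁)` and `X^(p - 2e₁)`, and finally to each
`X^(p - e₁ - e_j)`.
-/

open MeasureTheory Real Set Matrix Function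

/-- The density of the multivariate normal `N_n(μ, Σ)` with positive definite `Σ`. -/
noncomputable def normalPdf (n : ℕ) (μ : Fin n → ℝ) (S : Matrix (Fin n) (Fin n) ℝ)
    (x : Fin n → ℝ) : ℝ :=
  (2 * π) ^ (-(n : ℝ) / 2) * (Real.sqrt S.det)⁻¹ *
    Real.exp (-(1 / 2) * ((x - μ) ⬝ᵥ S⁻¹.mulVec (x - μ)))

/-- The product moment `E[∏ᵢ Xᵢ^(qᵢ)]` of `X ~ N_n(μ, Σ)`. -/
noncomputable def nMom (n : ℕ) (μ : Fin n → ℝ) (S : Matrix (Fin n) (Fin n) ℝ)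
    (q : Fin n → ℕ) : ℝ :=
  ∫ x : Fin n → ℝ, (∏ k : Fin n, (x k) ^ q k) * normalPdf n μ S x

theorem Finset.prod_pow_update {ι M : Type*} [Fintype ι] [DecidableEq ι] [CommMonoid M]
    (x : ι → M) (q : ι → ℕ) (k : ι) (a : ℕ) :
    ∏ i, x i ^ update q k a i = x k ^ a * ∏ i ∈ Finset.univ.erase k, x i ^ q i := by
  rw [← Finset.mul_prod_erase _ _ (Finset.mem_univ k), update_self]
  congr 1
  exact Finset.prod_congr rfl fun i hi => by rw [update_of_ne (Finset.ne_of_mem_erase hi)]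

theorem Finset.prod_pow_update_succ {ι M : Type*} [Fintype ι] [DecidableEq ι] [CommMonoid M]
    (x : ι → M) (q : ι → ℕ) (k : ι) :
    ∏ i, x i ^ update q k (q k + 1) i = x k * ∏ i, x i ^ q i := by
  rw [Finset.prod_pow_update, ← Finset.mul_prod_erase _ _ (Finset.mem_univ k), pow_succ,
    mul_comm _ (x k), mul_assoc]

theorem hasLineDerivAt_prod_pow {ι : Type*} [Fintype ι] [DecidableEq ι] (q : ι → ℕ)
    (x v : ι → ℝ) :
    HasLineDerivAt ℝ (fun x : ι → ℝ => ∏ i, x i ^ q i)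
      (∑ k, v k * q k * ∏ i, x i ^ update q k (q k - 1) i) x v := by
  have h := HasDerivAt.fun_finsetProd (u := Finset.univ) (x := (0 : ℝ))
    (fun i _ => (((hasDerivAt_id' (0 : ℝ)).const_mul (v i)).const_add (x i)).fun_pow (q i))
  refine (h.congr_deriv ?_).congr_of_eventuallyEq (Filter.Eventually.of_forall fun t => ?_)
  · refine Finset.sum_congr rfl fun k _ => ?_
    simp only [Finset.prod_pow_update, mul_zero, add_zero, smul_eq_mul, mul_one]
    ring
  · simp [mul_comm]

section NormalMoments

variable {n : ℕ} {μ : Fin n → ℝ} {S : Matrix (Fin n) (Fin n) ℝ}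

theorem hasLineDerivAt_normalPdf (hS : S.IsSymm) (x v : Fin n → ℝ) :
    HasLineDerivAt ℝ (normalPdf n μ S)
      (-((x - μ) ⬝ᵥ S⁻¹ *ᵥ v) * normalPdf n μ S x) x v := by
  set w := x - μ
  have hsymm : v ⬝ᵥ S⁻¹ *ᵥ w = w ⬝ᵥ S⁻¹ *ᵥ v := by
    rw [dotProduct_mulVec, ← mulVec_transpose, hS.inv.eq, dotProduct_comm]
  have hquad : ∀ t : ℝ, (x + t • v - μ) ⬝ᵥ S⁻¹ *ᵥ (x + t • v - μ)
      = w ⬝ᵥ S⁻¹ *ᵥ w + 2 * (w ⬝ᵥ S⁻¹ *ᵥ v) * t + (v ⬝ᵥ S⁻¹ *ᵥ v) * t ^ 2 := by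
    intro t
    rw [show x + t • v - μ = w + t • v by simp only [w]; abel]
    simp only [mulVec_add, mulVec_smul, dotProduct_add, add_dotProduct, dotProduct_smul,
      smul_dotProduct, smul_eq_mul, hsymm]
    ring
  have hpoly : HasDerivAt (fun t : ℝ => w ⬝ᵥ S⁻¹ *ᵥ w + 2 * (w ⬝ᵥ S⁻¹ *ᵥ v) * t
      + (v ⬝ᵥ S⁻¹ *ᵥ v) * t ^ 2) (2 * (w ⬝ᵥ S⁻¹ *ᵥ v)) 0 := by
    simpa using (((hasDerivAt_id (0 : ℝ)).const_mul (2 * (w ⬝ᵥ S⁻¹ *ᵥ v))).const_add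
      (w ⬝ᵥ S⁻¹ *ᵥ w)).fun_add ((hasDerivAt_pow 2 (0 : ℝ)).const_mul (v ⬝ᵥ S⁻¹ *ᵥ v))
  refine ((((hpoly.const_mul (-(1 / 2) : ℝ)).exp).const_mul
    ((2 * π) ^ (-(n : ℝ) / 2) * (Real.sqrt S.det)⁻¹)).congr_deriv ?_).congr_of_eventuallyEq
    (Filter.Eventually.of_forall fun t => ?_)
  · simp only [normalPdf, w]
    ring_nf
  · simp only [normalPdf]
    rw [hquad t]

theorem integral_hasLineDerivAt_mul_normalPdf (hS : S.IsSymm) {f f' : (Fin n → ℝ) → ℝ}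
    {v : Fin n → ℝ} (hf : ∀ x, HasLineDerivAt ℝ f (f' x) x v)
    (hf'g : Integrable fun x => f' x * normalPdf n μ S x)
    (hfg' : Integrable fun x => f x * ((x - μ) ⬝ᵥ S⁻¹ *ᵥ v) * normalPdf n μ S x)
    (hfg : Integrable fun x => f x * normalPdf n μ S x) :
    ∫ x, f' x * normalPdf n μ S x
      = ∫ x, f x * ((x - μ) ⬝ᵥ S⁻¹ *ᵥ v) * normalPdf n μ S x := by
  have h := integral_bilinear_hasLineDerivAt_right_eq_neg_left_of_integrable
    (B := ContinuousLinearMap.mul ℝ ℝ) (μ := volume) (hf'g := hf'g)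
    (g' := fun x => -((x - μ) ⬝ᵥ S⁻¹ *ᵥ v) * normalPdf n μ S x)
    (hfg'.neg.congr (.of_forall fun x => by
      simp only [Pi.neg_apply, ContinuousLinearMap.mul_apply']; ring))
    hfg (fun x _ => hf x) (fun x _ => hasLineDerivAt_normalPdf hS x v)
  simp only [ContinuousLinearMap.mul_apply', neg_mul, mul_neg, integral_neg, neg_inj] at h
  simpa only [mul_assoc] using h.symm

variable (hS : S.IsSymm) (hdet : IsUnit S.det)
  (hfin : ∀ q : Fin n → ℕ,
    Integrable (fun x : Fin n → ℝ => (∏ k : Fin n, (x k) ^ q k) * normalPdf n μ S x))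
include hS hdet hfin

theorem nMom_update_succ (q : Fin n → ℕ) (j : Fin n) :
    nMom n μ S (update q j (q j + 1))
      = μ j * nMom n μ S q + ∑ k, S k j * q k * nMom n μ S (update q k (q k - 1)) := by
  set v : Fin n → ℝ := S *ᵥ Pi.single j 1
  have hv : ∀ x : Fin n → ℝ, (x - μ) ⬝ᵥ S⁻¹ *ᵥ v = x j - μ j := fun x => by
    rw [mulVec_mulVec, nonsing_inv_mul _ hdet, one_mulVec, dotProduct_single, mul_one,
      Pi.sub_apply]
  have hcoord : ∀ k, v k = S k j := fun k => by simp [v, mulVec_single]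
  have hmoment : ∀ k, Integrable fun x : Fin n → ℝ =>
      S k j * q k * ((∏ i, x i ^ update q k (q k - 1) i) * normalPdf n μ S x) :=
    fun k => (hfin _).const_mul _
  have hderiv : ∀ x : Fin n → ℝ,
      (∑ k, v k * q k * ∏ i, x i ^ update q k (q k - 1) i) * normalPdf n μ S x
        = ∑ k, S k j * q k * ((∏ i, x i ^ update q k (q k - 1) i) * normalPdf n μ S x) :=
    fun x => by simp only [Finset.sum_mul, hcoord, mul_assoc]
  have hweight : ∀ x : Fin n → ℝ,
      (∏ i, x i ^ q i) * ((x - μ) ⬝ᵥ S⁻¹ *ᵥ v) * normalPdf n μ S x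
        = (∏ i, x i ^ update q j (q j + 1) i) * normalPdf n μ S x
          - μ j * ((∏ i, x i ^ q i) * normalPdf n μ S x) :=
    fun x => by rw [hv, Finset.prod_pow_update_succ]; ring
  have hibp := integral_hasLineDerivAt_mul_normalPdf hS (fun x => hasLineDerivAt_prod_pow q x v)
    (by simpa only [hderiv] using integrable_finsetSum _ fun k _ => hmoment k)
    (by simp only [hweight]; exact (hfin _).sub ((hfin q).const_mul (μ j))) (hfin q)
  simp only [hderiv, hweight] at hibp
  rw [integral_finsetSum _ fun k _ => hmoment k, integral_sub (hfin _) ((hfin q).const_mul _),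
    integral_const_mul] at hibp
  simp only [integral_const_mul] at hibp
  unfold nMom
  linarith

theorem nMom_update_add_one (r : Fin n → ℕ) (j : Fin n) (a : ℕ) :
    nMom n μ S (update r j (a + 1))
      = μ j * nMom n μ S (update r j a) + S j j * a * nMom n μ S (update r j (a - 1))
        + ∑ k ∈ Finset.univ.erase j,
            S k j * r k * nMom n μ S (update (update r j a) k (r k - 1)) := by
  have h := nMom_update_succ hS hdet hfin (update r j a) j
  rw [← Finset.add_sum_erase _ _ (Finset.mem_univ j)] at h
  simp only [update_self, update_idem] at h
  rw [h, add_assoc]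
  congr 2
  refine Finset.sum_congr rfl fun k hk => ?_
  rw [update_of_ne (Finset.ne_of_mem_erase hk)]

theorem nMom_update_update_add_one (r : Fin n → ℕ) {j k : Fin n} (hkj : k ≠ j) (a b : ℕ) :
    nMom n μ S (update (update r j (a + 1)) k b)
      = μ j * nMom n μ S (update (update r j a) k b)
        + S j j * a * nMom n μ S (update (update r j (a - 1)) k b)
        + S k j * b * nMom n μ S (update (update r j a) k (b - 1))
        + ∑ l ∈ (Finset.univ.erase j).erase k,
            S l j * r l * nMom n μ S (update (update (update r j a) k b) l (r l - 1)) := by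
  have h := nMom_update_add_one hS hdet hfin (update r k b) j a
  rw [← Finset.add_sum_erase (M := ℝ) _ _ (Finset.mem_erase.2 ⟨hkj, Finset.mem_univ k⟩)] at h
  simp only [update_comm hkj, update_self, update_idem] at h
  rw [h, ← add_assoc]
  congr 1
  refine Finset.sum_congr rfl fun l hl => ?_
  rw [update_of_ne (Finset.ne_of_mem_erase hl)]

/-- The factor `a` keeps the identity true at `a = 0`, where `a - 1` truncates. -/
theorem mul_nMom_update_eq (r : Fin n → ℕ) (j : Fin n) (a : ℕ) :
    S j j * a * nMom n μ S (update r j a)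
      = μ j * (S j j * a * nMom n μ S (update r j (a - 1)))
        + S j j ^ 2 * a * ((a : ℝ) - 1) * nMom n μ S (update r j (a - 2))
        + ∑ k ∈ Finset.univ.erase j,
            S j j * S k j * a * r k * nMom n μ S (update (update r j (a - 1)) k (r k - 1)) := by
  cases a with
  | zero => simp
  | succ c =>
    have hsum : S j j * (c + 1 : ℕ) * ∑ k ∈ Finset.univ.erase j,
          S k j * r k * nMom n μ S (update (update r j c) k (r k - 1))
        = ∑ k ∈ Finset.univ.erase j,
            S j j * S k j * (c + 1 : ℕ) * r k * nMom n μ S (update (update r j c) k (r k - 1)) := by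
      rw [Finset.mul_sum]
      exact Finset.sum_congr rfl fun k _ => by ring
    rw [nMom_update_add_one hS hdet hfin r j c, Nat.add_sub_cancel, Nat.add_sub_add_right c 1 1,
      ← hsum]
    push_cast
    ring

theorem sum_mul_nMom_update_update_add_one (r : Fin n → ℕ) (j : Fin n) (a : ℕ) :
    ∑ k ∈ Finset.univ.erase j, S k j * r k * nMom n μ S (update (update r j (a + 1)) k (r k - 1))
      = μ j * ∑ k ∈ Finset.univ.erase j,
            S k j * r k * nMom n μ S (update (update r j a) k (r k - 1))
        + ∑ k ∈ Finset.univ.erase j,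
            S j j * S k j * a * r k * nMom n μ S (update (update r j (a - 1)) k (r k - 1))
        + ∑ k ∈ Finset.univ.erase j,
            S k j ^ 2 * r k * ((r k : ℝ) - 1) * nMom n μ S (update (update r j a) k (r k - 2))
        + ∑ k ∈ Finset.univ.erase j, ∑ l ∈ (Finset.univ.erase j).erase k,
            S k j * S l j * r k * r l *
              nMom n μ S (update (update (update r j a) k (r k - 1)) l (r l - 1)) := by
  have hterm : ∀ k ∈ Finset.univ.erase j,
      S k j * r k * nMom n μ S (update (update r j (a + 1)) k (r k - 1))
        = μ j * (S k j * r k * nMom n μ S (update (update r j a) k (r k - 1)))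
          + S j j * S k j * a * r k * nMom n μ S (update (update r j (a - 1)) k (r k - 1))
          + S k j ^ 2 * r k * ((r k : ℝ) - 1) * nMom n μ S (update (update r j a) k (r k - 2))
          + ∑ l ∈ (Finset.univ.erase j).erase k, S k j * S l j * r k * r l *
              nMom n μ S (update (update (update r j a) k (r k - 1)) l (r l - 1)) := by
    intro k hk
    have hcast : (r k : ℝ) * ((r k - 1 : ℕ) : ℝ) = r k * ((r k : ℝ) - 1) := by
      cases r k <;> simp
    have hsum : S k j * r k * ∑ l ∈ (Finset.univ.erase j).erase k,
          S l j * r l * nMom n μ S (update (update (update r j a) k (r k - 1)) l (r l - 1))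
        = ∑ l ∈ (Finset.univ.erase j).erase k, S k j * S l j * r k * r l *
            nMom n μ S (update (update (update r j a) k (r k - 1)) l (r l - 1)) := by
      rw [Finset.mul_sum]
      exact Finset.sum_congr rfl fun l _ => by ring
    rw [nMom_update_update_add_one hS hdet hfin r (Finset.ne_of_mem_erase hk), Nat.sub_sub, ← hsum]
    linear_combination S k j ^ 2 * nMom n μ S (update (update r j a) k (r k - 2)) * hcast
  rw [Finset.sum_congr rfl hterm, Finset.sum_add_distrib, Finset.sum_add_distrib,
    Finset.sum_add_distrib, Finset.mul_sum]

end NormalMoments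

theorem stmt_9_general (n : ℕ) (i1 : Fin n)
    (μ : Fin n → ℝ) (S : Matrix (Fin n) (Fin n) ℝ) (hS : S.PosDef)
    (p : Fin n → ℕ) (hp : 2 ≤ p i1)
    (hfin : ∀ q : Fin n → ℕ,
      Integrable (fun x : Fin n → ℝ => (∏ k : Fin n, (x k) ^ q k) * normalPdf n μ S x)) :
    nMom n μ S p =
      S i1 i1 * nMom n μ S (update p i1 (p i1 - 2))
      + (μ i1) ^ 2 * nMom n μ S (update p i1 (p i1 - 2))
      + S i1 i1 ^ 2 * ((p i1 : ℝ) - 2) * ((p i1 : ℝ) - 3) * nMom n μ S (update p i1 (p i1 - 4))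
      + 2 * ∑ j ∈ Finset.univ.erase i1,
          S i1 i1 * S j i1 * ((p i1 : ℝ) - 2) * (p j : ℝ) *
            nMom n μ S (update (update p i1 (p i1 - 3)) j (p j - 1))
      + ∑ j ∈ Finset.univ.erase i1,
          (S j i1) ^ 2 * (p j : ℝ) * ((p j : ℝ) - 1) *
            nMom n μ S (update (update p i1 (p i1 - 2)) j (p j - 2))
      + ∑ j ∈ Finset.univ.erase i1, ∑ i ∈ (Finset.univ.erase i1).erase j,
          S j i1 * S i i1 * (p j : ℝ) * (p i : ℝ) *
            nMom n μ S (update (update (update p i1 (p i1 - 2)) j (p j - 1)) i (p i - 1))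
      + 2 * μ i1 *
          (S i1 i1 * ((p i1 : ℝ) - 2) * nMom n μ S (update p i1 (p i1 - 3))
           + ∑ j ∈ Finset.univ.erase i1,
               S j i1 * (p j : ℝ) *
                 nMom n μ S (update (update p i1 (p i1 - 2)) j (p j - 1))) := by
  have hsymm : S.IsSymm := isHermitian_iff_isSymm.mp hS.isHermitian
  have hdet : IsUnit S.det := isUnit_iff_ne_zero.mpr hS.det_pos.ne'
  have hp1 : 1 ≤ p i1 := by omega
  have hp_rec := nMom_update_add_one hsymm hdet hfin p i1 (p i1 - 1)
  have hp1_rec := nMom_update_add_one hsymm hdet hfin p i1 (p i1 - 2)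
  have hp2_rec := mul_nMom_update_eq hsymm hdet hfin p i1 (p i1 - 2)
  have hcross_rec := sum_mul_nMom_update_update_add_one hsymm hdet hfin p i1 (p i1 - 2)
  rw [Nat.sub_add_cancel hp1, update_eq_self] at hp_rec
  simp only [show p i1 - 2 + 1 = p i1 - 1 by omega, Nat.sub_sub, Nat.reduceAdd,
    Nat.cast_sub hp1, Nat.cast_sub hp, Nat.cast_ofNat, Nat.cast_one]
    at hp_rec hp1_rec hp2_rec hcross_rec
  linear_combination hp_rec + μ i1 * hp1_rec + hp2_rec + hcross_rec

/-- Product-moment recursion for the multivariate normal distribution (normal case of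
Corollary 1): for nonnegative integers `p₁,…,p_n` with `p₁ ≥ 2`, all moments being finite,
`E[∏ Xᵢ^(pᵢ)] = σ₁₁E[X₁^(p₁-2)∏] + μ₁²E[X₁^(p₁-2)∏] + σ₁₁²(p₁-2)(p₁-3)E[X₁^(p₁-4)∏]
 + 2Σⱼσ₁₁σ_{j1}(p₁-2)pⱼE[X₁^(p₁-3)Xⱼ^(pⱼ-1)∏] + Σⱼσ_{j1}²pⱼ(pⱼ-1)E[X₁^(p₁-2)Xⱼ^(pⱼ-2)∏]
 + ΣⱼΣ_{i≠j}σ_{j1}σ_{i1}pⱼpᵢE[Xᵢ^(pᵢ-1)Xⱼ^(pⱼ-1)X₁^(p₁-2)∏]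
 + 2μ₁{σ₁₁(p₁-2)E[X₁^(p₁-3)∏] + Σⱼσ_{j1}pⱼE[Xⱼ^(pⱼ-1)X₁^(p₁-2)∏]}`. -/
theorem stmt_9 (n : ℕ) (hn : 0 < n) (i1 : Fin n) (hi1 : i1 = ⟨0, hn⟩)
    (μ : Fin n → ℝ) (S : Matrix (Fin n) (Fin n) ℝ) (hS : S.PosDef)
    (p : Fin n → ℕ) (hp : 2 ≤ p i1)
    (hfin : ∀ q : Fin n → ℕ,
      Integrable (fun x : Fin n → ℝ => (∏ k : Fin n, (x k) ^ q k) * normalPdf n μ S x)) :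
    nMom n μ S p =
      S i1 i1 * nMom n μ S (update p i1 (p i1 - 2))
      + (μ i1) ^ 2 * nMom n μ S (update p i1 (p i1 - 2))
      + S i1 i1 ^ 2 * ((p i1 : ℝ) - 2) * ((p i1 : ℝ) - 3) * nMom n μ S (update p i1 (p i1 - 4))
      + 2 * ∑ j ∈ Finset.univ.erase i1,
          S i1 i1 * S j i1 * ((p i1 : ℝ) - 2) * (p j : ℝ) *
            nMom n μ S (update (update p i1 (p i1 - 3)) j (p j - 1))
      + ∑ j ∈ Finset.univ.erase i1,
          (S j i1) ^ 2 * (p j : ℝ) * ((p j : ℝ) - 1) *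
            nMom n μ S (update (update p i1 (p i1 - 2)) j (p j - 2))
      + ∑ j ∈ Finset.univ.erase i1, ∑ i ∈ (Finset.univ.erase i1).erase j,
          S j i1 * S i i1 * (p j : ℝ) * (p i : ℝ) *
            nMom n μ S (update (update (update p i1 (p i1 - 2)) j (p j - 1)) i (p i - 1))
      + 2 * μ i1 *
          (S i1 i1 * ((p i1 : ℝ) - 2) * nMom n μ S (update p i1 (p i1 - 3))
           + ∑ j ∈ Finset.univ.erase i1,
               S j i1 * (p j : ℝ) *
                 nMom n μ S (update (update p i1 (p i1 - 2)) j (p j - 1))) :=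
  stmt_9_general n i1 μ S hS p hp hfin
end

section
/- For every integer n ≥ 3 with n ≠ 4, ∫₀^∞ t^{n/2−1} e^{−t}/(1+e^{−t})² dt = Γ(n/2) (1 − 2^{2−n/2}) ζ(n/2 − 1), where ζ is the Riemann zeta function. Equivalently, the normalizing constant of the n-dimensional logistic density generator is c_n = 1/( π^{n/2} (2^{n/2} − 4) ζ(n/2 − 1) ). -/
/-!
For `t > 0` the logistic generator expands as `e^{-t}/(1+e^{-t})² = ∑_{k ≥ 1} (-1)^{k+1} k e^{-kt}`.
Integrating termwise against `t^{s-1}` turns it into `Γ(s) ∑ (-1)^{k+1} k^{1-s} = Γ(s) η(s-1)`, and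
the Dirichlet eta function is `η(w) = (1 - 2^{1-w}) ζ(w)`; this proves the formula for
`Re s > 2`. Both sides are holomorphic on `{Re s > 0} \ {2}`, a connected set, so the identity
theorem extends the formula to `0 < Re s < 2`, which covers `n = 3`. The normalizing constant is
then pure algebra, using `1 - 2^{2-s} = (2^s - 4)/2^s`.
-/

open MeasureTheory Real Set Filter Topology

open Complex in
lemma isPreconnected_setOf_lt_re_sdiff_singleton {c : ℝ} {a : ℂ} (ha : c < a.re) :
    IsPreconnected ({z : ℂ | c < z.re} \ {a}) := by
  -- cover it by three convex pieces: the two half-planes cut off by the diagonals through `a`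
  -- on the side of `c`, and `{Re > Re a}`
  have hA : Convex ℝ {z : ℂ | c < z.re ∧ z.re - z.im < a.re - a.im} :=
    (convex_halfSpace_re_gt c).inter (convex_halfSpace_lt (reLm - imLm).isLinear _)
  have hB : Convex ℝ {z : ℂ | c < z.re ∧ z.re + z.im < a.re + a.im} :=
    (convex_halfSpace_re_gt c).inter (convex_halfSpace_lt (reLm + imLm).isLinear _)
  have hAB := hA.isPreconnected.union (((c + a.re) / 2 : ℝ) + a.im * I)
    (by simp; constructor <;> linarith) (by simp; constructor <;> linarith) hB.isPreconnected
  have hABC := hAB.union (a + 1 + 2 * I) (Or.inl (by simp; constructor <;> linarith))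
    (by simp) (convex_halfSpace_re_gt a.re).isPreconnected
  convert hABC using 1
  ext z
  simp only [Set.mem_sdiff, mem_union, mem_ofPred_eq, mem_singleton_iff]
  constructor
  · rintro ⟨hz, hza⟩
    by_contra! h
    exact hza (Complex.ext (by linarith [h.1.1 hz, h.1.2 hz]) (by linarith [h.1.1 hz, h.1.2 hz]))
  · rintro ((⟨hz, h⟩ | ⟨hz, h⟩) | h) <;> refine ⟨by linarith, ?_⟩ <;> rintro rfl <;> linarith

lemma mellin_ofReal_eq_ofReal_integral (f : ℝ → ℝ) (r : ℝ) :
    mellin (fun t ↦ (f t : ℂ)) r = ((∫ t in Ioi 0, t ^ (r - 1) * f t : ℝ) : ℂ) := by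
  rw [mellin, ← integral_complex_ofReal]
  refine setIntegral_congr_fun measurableSet_Ioi fun t (ht : 0 < t) ↦ ?_
  rw [smul_eq_mul, Complex.ofReal_mul, Complex.ofReal_cpow ht.le]
  push_cast
  rfl

lemma hasSum_neg_one_pow_mul_nat_mul_pow {x : ℝ} (hx : |x| < 1) :
    HasSum (fun k : ℕ ↦ (-1) ^ (k + 1) * k * x ^ k) (x / (1 + x) ^ 2) := by
  have h := (hasSum_coe_mul_geometric_of_norm_lt_one (r := -x) (by simpa using hx)).neg
  rw [show -(-x / (1 - -x) ^ 2) = x / (1 + x) ^ 2 by ring] at h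
  exact h.congr_fun fun k ↦ by rw [neg_pow, pow_succ]; ring

open Complex in
lemma hasSum_neg_one_pow_div_cpow {w : ℂ} (hw : 1 < w.re) :
    HasSum (fun k : ℕ ↦ (-1) ^ (k + 1) / (k : ℂ) ^ w) ((1 - 2 ^ (1 - w)) * riemannZeta w) := by
  have hζ : HasSum (fun k : ℕ ↦ 1 / (k : ℂ) ^ w) (riemannZeta w) := by
    rw [zeta_eq_tsum_one_div_nat_cpow hw]
    exact (summable_one_div_nat_cpow.mpr hw).hasSum
  -- `ζ(w) - η(w)` is twice the sum over even `k`, i.e. `2 ^ (1 - w) ζ(w)`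
  have heven : HasSum (fun k : ℕ ↦ (1 + (-1) ^ (2 * k)) / ((2 * k : ℕ) : ℂ) ^ w)
      (2 ^ (1 - w) * riemannZeta w) := by
    refine (hζ.mul_left (2 ^ (1 - w))).congr_fun fun k ↦ ?_
    have h2k : ((2 * k : ℕ) : ℂ) ^ w = 2 ^ w * k ^ w := by
      exact_mod_cast natCast_mul_natCast_cpow 2 k w
    rw [pow_mul, neg_one_sq, one_pow, h2k, cpow_sub _ _ two_ne_zero, cpow_one]
    ring
  have hodd : HasSum (fun k : ℕ ↦ (1 + (-1) ^ (2 * k + 1)) / ((2 * k + 1 : ℕ) : ℂ) ^ w) 0 := by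
    simp [pow_succ, pow_mul]
  have hdiff := HasSum.even_add_odd (f := fun k : ℕ ↦ (1 + (-1) ^ k) / (k : ℂ) ^ w) heven hodd
  rw [add_zero] at hdiff
  rw [show (1 - 2 ^ (1 - w)) * riemannZeta w = riemannZeta w - 2 ^ (1 - w) * riemannZeta w by ring]
  exact (hζ.sub hdiff).congr_fun fun k ↦ by ring

noncomputable def logisticGenerator (t : ℝ) : ℝ := exp (-t) / (1 + exp (-t)) ^ 2

lemma continuous_logisticGenerator : Continuous logisticGenerator :=
  (continuous_exp.comp continuous_neg).div (by fun_prop) fun t ↦ by positivity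

lemma abs_logisticGenerator_le (t : ℝ) : |logisticGenerator t| ≤ exp (-t) := by
  have h : 1 ≤ (1 + exp (-t)) ^ 2 := one_le_pow₀ (by linarith [exp_pos (-t)])
  rw [logisticGenerator, abs_of_nonneg (by positivity)]
  exact div_le_self (exp_pos _).le h

lemma hasSum_logisticGenerator {t : ℝ} (ht : 0 < t) :
    HasSum (fun k : ℕ ↦ (-1) ^ (k + 1) * k * exp (-k * t)) (logisticGenerator t) := by
  have hx : |exp (-t)| < 1 := by rw [abs_exp, exp_lt_one_iff]; linarith
  refine (hasSum_neg_one_pow_mul_nat_mul_pow hx).congr_fun fun k ↦ ?_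
  rw [← exp_nat_mul]; ring_nf

open Complex in
lemma mellin_logisticGenerator_of_two_lt_re {s : ℂ} (hs : 2 < s.re) :
    mellin (fun t ↦ (logisticGenerator t : ℂ)) s =
      Gamma s * (1 - 2 ^ (2 - s)) * riemannZeta (s - 1) := by
  have hs1 : 1 < (s - 1).re := by rw [sub_re, one_re]; linarith
  have hmellin := hasSum_mellin (a := fun k : ℕ ↦ (-1) ^ (k + 1) * k) (p := fun k ↦ k)
    (F := fun t ↦ (logisticGenerator t : ℂ)) (s := s) (fun k ↦ ?_) (by linarith) (fun t ht ↦ ?_) ?_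
  · have heta := (hasSum_neg_one_pow_div_cpow hs1).mul_left (Gamma s)
    rw [show (1 : ℂ) - (s - 1) = 2 - s by ring, ← mul_assoc] at heta
    refine hmellin.unique (heta.congr_fun fun k ↦ ?_)
    rcases k.eq_zero_or_pos with rfl | hk
    · simp [zero_cpow (ne_zero_of_one_lt_re hs1)]
    · have hk0 : (k : ℂ) ≠ 0 := Nat.cast_ne_zero.mpr hk.ne'
      rw [ofReal_natCast, cpow_sub _ _ hk0, cpow_one]
      field_simp
  · rcases k.eq_zero_or_pos with rfl | hk
    · simp
    · exact Or.inr (Nat.cast_pos.mpr hk)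
  · simpa using (hasSum_ofReal.mpr (hasSum_logisticGenerator ht))
  · have hσ : 1 < s.re - 1 := by linarith
    refine (Real.summable_nat_rpow_inv.mpr hσ).congr fun k ↦ ?_
    rcases k.eq_zero_or_pos with rfl | hk
    · simp [Real.zero_rpow (by linarith : s.re - 1 ≠ 0)]
    · simp [Real.rpow_sub (Nat.cast_pos.mpr hk)]

lemma differentiableAt_mellin_logisticGenerator {s : ℂ} (hs : 0 < s.re) :
    DifferentiableAt ℂ (mellin fun t ↦ (logisticGenerator t : ℂ)) s := by
  have hbound : ∀ t, ‖(logisticGenerator t : ℂ)‖ ≤ exp (-t) := fun t ↦ by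
    simpa using abs_logisticGenerator_le t
  have hc : Continuous fun t ↦ (logisticGenerator t : ℂ) :=
    Complex.continuous_ofReal.comp continuous_logisticGenerator
  refine mellin_differentiableAt_of_isBigO_rpow_exp one_pos
    (hc.locallyIntegrable.locallyIntegrableOn _) ?_ ?_ (b := 0) (by simpa using hs)
  · refine Asymptotics.IsBigO.of_bound 1 (Eventually.of_forall fun t ↦ ?_)
    simpa using hbound t
  · refine Asymptotics.IsBigO.of_bound 1 (eventually_nhdsWithin_of_forall fun t (ht : 0 < t) ↦ ?_)
    simpa using (hbound t).trans (exp_le_one_iff.mpr (by linarith))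

open Complex in
lemma differentiableAt_Gamma_mul_one_sub_two_cpow_mul_riemannZeta {s : ℂ} (hs : 0 < s.re)
    (hs2 : s ≠ 2) :
    DifferentiableAt ℂ (fun s : ℂ ↦ Gamma s * (1 - 2 ^ (2 - s)) * riemannZeta (s - 1)) s := by
  have hΓ : DifferentiableAt ℂ Complex.Gamma s := differentiableAt_Gamma s fun m hm ↦ by
    have := congrArg re hm
    simp only [neg_re, natCast_re] at this
    linarith [(m.cast_nonneg : (0 : ℝ) ≤ m)]
  have hfactor : DifferentiableAt ℂ (fun s : ℂ ↦ 1 - (2 : ℂ) ^ (2 - s)) s :=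
    ((differentiableAt_id.const_sub 2).const_cpow (Or.inl two_ne_zero)).const_sub 1
  have hζ : DifferentiableAt ℂ (fun s : ℂ ↦ riemannZeta (s - 1)) s :=
    (differentiableAt_riemannZeta (by contrapose! hs2; linear_combination hs2)).comp s
      (differentiableAt_id.sub_const 1)
  exact (hΓ.mul hfactor).mul hζ

open Complex in
lemma mellin_logisticGenerator {s : ℂ} (hs : 0 < s.re) (hs2 : s ≠ 2) :
    mellin (fun t ↦ (logisticGenerator t : ℂ)) s =
      Gamma s * (1 - 2 ^ (2 - s)) * riemannZeta (s - 1) := by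
  have hU : IsOpen ({z : ℂ | 0 < z.re} \ {2}) :=
    (isOpen_lt continuous_const continuous_re).sdiff isClosed_singleton
  have hmellin : AnalyticOnNhd ℂ (mellin fun t ↦ (logisticGenerator t : ℂ))
      ({z : ℂ | 0 < z.re} \ {2}) := DifferentiableOn.analyticOnNhd
    (fun z hz ↦ (differentiableAt_mellin_logisticGenerator hz.1).differentiableWithinAt) hU
  have hrhs : AnalyticOnNhd ℂ (fun s : ℂ ↦ Gamma s * (1 - 2 ^ (2 - s)) * riemannZeta (s - 1))
      ({z : ℂ | 0 < z.re} \ {2}) := DifferentiableOn.analyticOnNhd (fun z hz ↦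
    (differentiableAt_Gamma_mul_one_sub_two_cpow_mul_riemannZeta hz.1 hz.2).differentiableWithinAt)
    hU
  have heq : (mellin fun t ↦ (logisticGenerator t : ℂ)) =ᶠ[𝓝 3]
      fun s : ℂ ↦ Gamma s * (1 - 2 ^ (2 - s)) * riemannZeta (s - 1) := by
    filter_upwards [(isOpen_lt continuous_const continuous_re).mem_nhds
      (show (2 : ℝ) < (3 : ℂ).re by norm_num)] with z hz
    exact mellin_logisticGenerator_of_two_lt_re hz
  exact hmellin.eqOn_of_preconnected_of_eventuallyEq hrhs
    (isPreconnected_setOf_lt_re_sdiff_singleton (by norm_num)) (by norm_num) heq ⟨hs, hs2⟩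

open Complex in
lemma Gamma_div_two_pi_cpow_mul_inv {s : ℂ} (hs : Gamma s ≠ 0) (z : ℂ) :
    Gamma s / (2 * π) ^ s * (Gamma s * (1 - 2 ^ (2 - s)) * z)⁻¹ =
      1 / (π ^ s * (2 ^ s - 4) * z) := by
  have h2 : (2 : ℂ) ^ s ≠ 0 := cpow_ne_zero_iff.mpr (Or.inl two_ne_zero)
  have h4 : (2 : ℂ) ^ (2 - s) = 4 / 2 ^ s := by
    rw [cpow_sub _ _ two_ne_zero, cpow_two]; norm_num
  have h2π : ((2 : ℂ) * π) ^ s = 2 ^ s * π ^ s := by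
    exact_mod_cast mul_cpow_ofReal_nonneg zero_le_two pi_pos.le s
  rw [h2π, h4, one_sub_div h2]
  field_simp

/-- For every integer `n ≥ 3` with `n ≠ 4`:
`∫₀^∞ t^(n/2-1) e^(-t)/(1+e^(-t))² dt = Γ(n/2)(1-2^(2-n/2))ζ(n/2-1)` with `ζ` the Riemann zeta
function; equivalently, the normalizing constant of the `n`-dimensional logistic density
generator is `c_n = 1/(π^(n/2)(2^(n/2)-4)ζ(n/2-1))`. -/
theorem stmt_17 (n : ℕ) (hn : 3 ≤ n) (hn4 : n ≠ 4) :
    ((∫ t in Ioi (0 : ℝ), t ^ ((n : ℝ) / 2 - 1) *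
        (Real.exp (-t) / (1 + Real.exp (-t)) ^ 2) : ℝ) : ℂ) =
      (Real.Gamma ((n : ℝ) / 2) : ℂ) * (1 - (2 : ℂ) ^ (2 - (n : ℂ) / 2)) *
        riemannZeta ((n : ℂ) / 2 - 1) ∧
    ((Real.Gamma ((n : ℝ) / 2) / (2 * π) ^ ((n : ℝ) / 2) *
        (∫ t in Ioi (0 : ℝ), t ^ ((n : ℝ) / 2 - 1) *
          (Real.exp (-t) / (1 + Real.exp (-t)) ^ 2))⁻¹ : ℝ) : ℂ) =
      1 / ((π : ℂ) ^ ((n : ℂ) / 2) * ((2 : ℂ) ^ ((n : ℂ) / 2) - 4) *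
        riemannZeta ((n : ℂ) / 2 - 1)) := by
  have hs : (((n : ℝ) / 2 : ℝ) : ℂ) = (n : ℂ) / 2 := by push_cast; rfl
  have hpos : 0 < ((n : ℂ) / 2).re := by
    rw [← hs, Complex.ofReal_re]
    exact div_pos (Nat.cast_pos.mpr (by omega)) two_pos
  have hne : (n : ℂ) / 2 ≠ 2 := by
    contrapose! hn4
    exact_mod_cast (div_eq_iff two_ne_zero).mp hn4
  have hΓ : Complex.Gamma ((n : ℂ) / 2) = Real.Gamma ((n : ℝ) / 2) := by
    rw [← hs, Complex.Gamma_ofReal]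
  have hint := mellin_ofReal_eq_ofReal_integral logisticGenerator ((n : ℝ) / 2)
  rw [hs, mellin_logisticGenerator hpos hne, hΓ] at hint
  simp only [logisticGenerator] at hint
  refine ⟨hint.symm, ?_⟩
  rw [← Gamma_div_two_pi_cpow_mul_inv (Complex.Gamma_ne_zero_of_re_pos hpos), hΓ, hint,
    Complex.ofReal_mul, Complex.ofReal_div, Complex.ofReal_inv,
    Complex.ofReal_cpow (by positivity), hs]
  push_cast
  rfl
end
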